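/- Let ν_1 ≠ ν_2 be positive reals and let P, Q be Student's t-distributions with ν_1 and ν_2 degrees of freedom respectively. Then W_∞(P, Q) = ∞. -/

import Mathlib

open MeasureTheory ENNReal

/-- Student's t-distribution with `ν` degrees of freedom, given by its density
`Γ((ν+1)/2)/(√(νπ) Γ(ν/2)) (1 + x²/ν)^{-(ν+1)/2}` w.r.t. Lebesgue measure. -/
noncomputable def studentTMeasure (ν : ℝ) : Measure ℝ :=
  volume.withDensity (fun x => ENNReal.ofReal
    (Real.Gamma ((ν + 1) / 2) / (Real.sqrt (ν * Real.pi) * Real.Gamma (ν / 2))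
      * (1 + x ^ 2 / ν) ^ (-(ν + 1) / 2)))

/-- `W∞(P,Q) = inf {ε > 0 : P(A) ≤ Q(A^ε) for all Borel A}`, where `A^ε` is the
open `ε`-enlargement of `A`; the infimum of the empty set is `∞`. -/
noncomputable def WInf (P Q : Measure ℝ) : ℝ≥0∞ :=
  ⨅ (ε : ℝ) (_ : 0 < ε)
    (_ : ∀ A : Set ℝ, MeasurableSet A → P A ≤ Q (Metric.thickening ε A)),
    ENNReal.ofReal ε

/-
Student's `t_ν` density is comparable to `x^{-(ν+1)}` for large `x`, so its tail `P(X > t)` lies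
between two constant multiples of `t^{-ν}`. If `ν₁ < ν₂`, then for `A = [r + ε, ∞)` the mass
`P(A) ≳ r^{-ν₁}` beats `Q(A^ε) ≤ Q((r, ∞)) ≲ r^{-ν₂}` for large `r`, whatever `ε` is. If `ν₁ > ν₂`
the same comparison, with the roles of `P` and `Q` exchanged, is passed to the complements
`A = (-∞, r]`; this needs both measures to have total mass one, which follows from
`Γ(s) (1 + x²/ν)^{-s} = ∫₀^∞ t^{s-1} e^{-(1 + x²/ν) t} dt`, Tonelli and the Gaussian integral.
-/

open Set Filter Topology Real

lemma WInf_eq_top_of_forall_exists_lt {P Q : Measure ℝ}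
    (h : ∀ ε > 0, ∃ A, MeasurableSet A ∧ Q (Metric.thickening ε A) < P A) :
    WInf P Q = ∞ := by
  simp only [WInf, iInf_eq_top]
  intro ε hε hPQ
  obtain ⟨A, hA, hlt⟩ := h ε hε
  exact absurd (hPQ A hA) hlt.not_ge

lemma Real.thickening_Ici_subset_Ioi (ε r : ℝ) : Metric.thickening ε (Ici (r + ε)) ⊆ Ioi r := by
  intro x hx
  obtain ⟨y, hy, hxy⟩ := Metric.mem_thickening_iff.1 hx
  rw [Real.dist_eq, abs_lt] at hxy
  exact mem_Ioi.2 (by linarith [mem_Ici.1 hy])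

lemma Real.thickening_Iic_subset_Iio (ε r : ℝ) : Metric.thickening ε (Iic r) ⊆ Iio (r + ε) := by
  intro x hx
  obtain ⟨y, hy, hxy⟩ := Metric.mem_thickening_iff.1 hx
  rw [Real.dist_eq, abs_lt] at hxy
  exact mem_Iio.2 (by linarith [mem_Iic.1 hy])

lemma measure_thickening_Ici_lt {μ ν : Measure ℝ} {ε r : ℝ} (h : ν (Ioi r) < μ (Ici (r + ε))) :
    ν (Metric.thickening ε (Ici (r + ε))) < μ (Ici (r + ε)) :=
  (measure_mono (Real.thickening_Ici_subset_Ioi ε r)).trans_lt h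

lemma measure_thickening_Iic_lt {μ ν : Measure ℝ} [IsProbabilityMeasure μ]
    [IsProbabilityMeasure ν] {ε r : ℝ} (h : μ (Ioi r) < ν (Ici (r + ε))) :
    ν (Metric.thickening ε (Iic r)) < μ (Iic r) :=
  calc ν (Metric.thickening ε (Iic r))
      ≤ ν (Iio (r + ε)) := measure_mono (Real.thickening_Iic_subset_Iio ε r)
    _ = 1 - ν (Ici (r + ε)) := by rw [← compl_Ici, prob_compl_eq_one_sub measurableSet_Ici]
    _ < 1 - μ (Ioi r) :=
        (ENNReal.cancel_of_ne (by finiteness)).tsub_lt_tsub_left_of_le prob_le_one h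
    _ = μ (Iic r) := by rw [← compl_Ioi, prob_compl_eq_one_sub measurableSet_Ioi]

lemma lintegral_Ioi_ofReal_mul_rpow {K a t : ℝ} (hK : 0 ≤ K) (ha : 0 < a) (ht : 0 < t) :
    ∫⁻ x in Ioi t, ENNReal.ofReal (K * x ^ (-(a + 1))) = ENNReal.ofReal (K / a * t ^ (-a)) := by
  have hint : IntegrableOn (fun x : ℝ => K * x ^ (-(a + 1))) (Ioi t) :=
    (integrableOn_Ioi_rpow_of_lt (by linarith) ht).const_mul K
  rw [← ofReal_integral_eq_lintegral_ofReal hint, integral_const_mul,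
    integral_Ioi_rpow_of_lt (by linarith) ht]
  · congr 1
    rw [show -(a + 1) + 1 = -a by ring]
    field_simp
  · filter_upwards [ae_restrict_mem measurableSet_Ioi] with x (hx : t < x)
    have : 0 < x := ht.trans hx
    positivity

lemma withDensity_Ioi_le_of_le_rpow {f : ℝ → ℝ} {K a t : ℝ} (hK : 0 ≤ K) (ha : 0 < a)
    (ht : 0 < t) (hf : ∀ x > t, f x ≤ K * x ^ (-(a + 1))) :
    volume.withDensity (fun x => ENNReal.ofReal (f x)) (Ioi t) ≤
      ENNReal.ofReal (K / a * t ^ (-a)) := by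
  rw [withDensity_apply _ measurableSet_Ioi, ← lintegral_Ioi_ofReal_mul_rpow hK ha ht]
  exact setLIntegral_mono' measurableSet_Ioi fun x hx => ENNReal.ofReal_le_ofReal (hf x hx)

lemma le_withDensity_Ioi_of_rpow_le {f : ℝ → ℝ} {K a t : ℝ} (hK : 0 ≤ K) (ha : 0 < a)
    (ht : 0 < t) (hf : ∀ x > t, K * x ^ (-(a + 1)) ≤ f x) :
    ENNReal.ofReal (K / a * t ^ (-a)) ≤
      volume.withDensity (fun x => ENNReal.ofReal (f x)) (Ioi t) := by
  rw [withDensity_apply _ measurableSet_Ioi, ← lintegral_Ioi_ofReal_mul_rpow hK ha ht]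
  exact setLIntegral_mono' measurableSet_Ioi fun x hx => ENNReal.ofReal_le_ofReal (hf x hx)

lemma eventually_measure_Ioi_lt_measure_Ici {μ ν : Measure ℝ} {a b C c : ℝ} (hb : 0 ≤ b)
    (hba : b < a) (hc : 0 < c)
    (hμ : ∀ᶠ t in atTop, μ (Ioi t) ≤ ENNReal.ofReal (C * t ^ (-a)))
    (hν : ∀ᶠ t in atTop, ENNReal.ofReal (c * t ^ (-b)) ≤ ν (Ioi t)) (δ : ℝ) :
    ∀ᶠ r in atTop, μ (Ioi r) < ν (Ici (r + δ)) := by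
  have hratio : ∀ᶠ r in atTop, C * r ^ (-(a - b)) < c * 2 ^ (-b) := by
    have := (tendsto_rpow_neg_atTop (sub_pos.2 hba)).const_mul C
    rw [mul_zero] at this
    exact this.eventually_lt_const (by positivity)
  have hν' := (tendsto_atTop_add_const_right atTop δ tendsto_id).eventually hν
  filter_upwards [hμ, hν', hratio, eventually_gt_atTop 0, eventually_ge_atTop δ,
    eventually_gt_atTop (-δ)] with r hμr hνr hr hr0 hrδ hrδ'
  have hlt : C * r ^ (-a) < c * (r + δ) ^ (-b) :=
    calc C * r ^ (-a) = C * r ^ (-(a - b)) * r ^ (-b) := by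
          rw [mul_assoc, ← rpow_add hr0]; ring_nf
      _ < c * 2 ^ (-b) * r ^ (-b) := mul_lt_mul_of_pos_right hr (by positivity)
      _ = c * (2 * r) ^ (-b) := by rw [mul_rpow zero_le_two hr0.le, mul_assoc]
      _ ≤ c * (r + δ) ^ (-b) := by
          gcongr ?_ * ?_
          exact rpow_le_rpow_of_nonpos (by linarith) (by linarith) (by linarith)
  calc μ (Ioi r) ≤ ENNReal.ofReal (C * r ^ (-a)) := hμr
    _ < ENNReal.ofReal (c * (r + δ) ^ (-b)) := by
        have : 0 < r + δ := by linarith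
        exact (ENNReal.ofReal_lt_ofReal_iff (by positivity)).2 hlt
    _ ≤ ν (Ioi (r + δ)) := hνr
    _ ≤ ν (Ici (r + δ)) := measure_mono Ioi_subset_Ici_self

lemma one_add_sq_div_rpow_neg_le {ν s x : ℝ} (hν : 0 < ν) (hs : 0 ≤ s) (hx : 0 < x) :
    (1 + x ^ 2 / ν) ^ (-s) ≤ ν ^ s * x ^ (-(2 * s)) := by
  calc (1 + x ^ 2 / ν) ^ (-s) ≤ (x ^ 2 / ν) ^ (-s) :=
        rpow_le_rpow_of_nonpos (by positivity) (by linarith) (by linarith)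
    _ = ν ^ s * x ^ (-(2 * s)) := by
        rw [div_rpow (by positivity) hν.le, rpow_neg hν.le, div_inv_eq_mul, mul_comm,
          ← Real.rpow_natCast, ← rpow_mul hx.le]
        norm_num

lemma rpow_le_one_add_sq_div_rpow_neg {ν s x : ℝ} (hν : 0 < ν) (hs : 0 ≤ s) (hx : √ν ≤ x) :
    (2 / ν) ^ (-s) * x ^ (-(2 * s)) ≤ (1 + x ^ 2 / ν) ^ (-s) := by
  have hx0 : 0 < x := (sqrt_pos.2 hν).trans_le hx
  have hνx : ν ≤ x ^ 2 := by simpa [sq_sqrt hν.le] using pow_le_pow_left₀ (sqrt_nonneg ν) hx 2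
  have h2 : 1 + x ^ 2 / ν ≤ 2 / ν * x ^ 2 := by
    have : 1 ≤ x ^ 2 / ν := (one_le_div hν).2 hνx
    linarith [show 2 / ν * x ^ 2 = 2 * (x ^ 2 / ν) by ring]
  calc (2 / ν) ^ (-s) * x ^ (-(2 * s)) = (2 / ν * x ^ 2) ^ (-s) := by
        rw [mul_rpow (by positivity) (by positivity), ← Real.rpow_natCast, ← rpow_mul hx0.le]
        norm_num
    _ ≤ (1 + x ^ 2 / ν) ^ (-s) :=
        rpow_le_rpow_of_nonpos (by positivity) h2 (by linarith)

lemma studentTMeasure_Ioi_le {ν : ℝ} (hν : 0 < ν) :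
    ∃ C, ∀ t > 0, studentTMeasure ν (Ioi t) ≤ ENNReal.ofReal (C * t ^ (-ν)) := by
  have hK : 0 ≤ Gamma ((ν + 1) / 2) / (√(ν * π) * Gamma (ν / 2)) * ν ^ ((ν + 1) / 2) := by
    have := Gamma_pos_of_pos (by linarith : 0 < ν / 2)
    positivity
  refine ⟨_, fun t ht => withDensity_Ioi_le_of_le_rpow hK hν ht fun x hx => ?_⟩
  rw [mul_assoc, neg_div]
  gcongr
  have h := one_add_sq_div_rpow_neg_le (s := (ν + 1) / 2) hν (by positivity) (ht.trans hx)
  rwa [mul_div_cancel₀ _ two_ne_zero] at h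

lemma studentTMeasure_Ioi_ge {ν : ℝ} (hν : 0 < ν) :
    ∃ c > 0, ∀ t ≥ √ν, ENNReal.ofReal (c * t ^ (-ν)) ≤ studentTMeasure ν (Ioi t) := by
  have hK :
      0 < Gamma ((ν + 1) / 2) / (√(ν * π) * Gamma (ν / 2)) * (2 / ν) ^ (-((ν + 1) / 2)) := by
    have := Gamma_pos_of_pos (by linarith : 0 < ν / 2)
    have := Gamma_pos_of_pos (by linarith : 0 < (ν + 1) / 2)
    positivity
  refine ⟨_, div_pos hK hν, fun t ht =>
    le_withDensity_Ioi_of_rpow_le hK.le hν ((sqrt_pos.2 hν).trans_le ht) fun x hx => ?_⟩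
  rw [mul_assoc, neg_div]
  gcongr
  have h := rpow_le_one_add_sq_div_rpow_neg (s := (ν + 1) / 2) hν (by positivity) (ht.trans hx.le)
  rwa [mul_div_cancel₀ _ two_ne_zero] at h

lemma lintegral_Ioi_rpow_mul_exp_neg_mul {a r : ℝ} (ha : 0 < a) (hr : 0 < r) :
    ∫⁻ t in Ioi 0, ENNReal.ofReal (t ^ (a - 1) * exp (-(r * t))) =
      ENNReal.ofReal ((1 / r) ^ a * Gamma a) := by
  have hint : IntegrableOn (fun t : ℝ => t ^ (a - 1) * exp (-(r * t))) (Ioi 0) := by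
    simpa using integrableOn_rpow_mul_exp_neg_mul_rpow (p := 1) (by linarith) one_pos hr
  rw [← integral_rpow_mul_exp_neg_mul_Ioi ha hr, ofReal_integral_eq_lintegral_ofReal hint]
  filter_upwards [ae_restrict_mem measurableSet_Ioi] with t (ht : 0 < t)
  positivity

lemma lintegral_exp_neg_mul_sq {b : ℝ} (hb : 0 < b) :
    ∫⁻ x, ENNReal.ofReal (exp (-b * x ^ 2)) = ENNReal.ofReal √(π / b) := by
  rw [← integral_gaussian, ofReal_integral_eq_lintegral_ofReal (integrable_exp_neg_mul_sq hb)
    (ae_of_all _ fun _ => (exp_pos _).le)]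

lemma lintegral_one_add_sq_div_rpow_neg {ν s : ℝ} (hν : 0 < ν) (hs : 1 / 2 < s) :
    ∫⁻ x, ENNReal.ofReal ((1 + x ^ 2 / ν) ^ (-s)) =
      ENNReal.ofReal (√(ν * π) * Gamma (s - 1 / 2) / Gamma s) := by
  have hΓ : 0 < Gamma s := Gamma_pos_of_pos (by linarith)
  have key : ENNReal.ofReal (Gamma s) * ∫⁻ x, ENNReal.ofReal ((1 + x ^ 2 / ν) ^ (-s)) =
      ENNReal.ofReal (√(ν * π) * Gamma (s - 1 / 2)) :=
    calc ENNReal.ofReal (Gamma s) * ∫⁻ x, ENNReal.ofReal ((1 + x ^ 2 / ν) ^ (-s))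
        = ∫⁻ x, ∫⁻ t in Ioi 0, ENNReal.ofReal (t ^ (s - 1) * exp (-((1 + x ^ 2 / ν) * t))) := by
          rw [← lintegral_const_mul' _ _ ofReal_ne_top]
          congr with x
          rw [lintegral_Ioi_rpow_mul_exp_neg_mul (by linarith) (by positivity),
            ← ENNReal.ofReal_mul hΓ.le, one_div, inv_rpow (by positivity),
            ← rpow_neg (by positivity), mul_comm]
      _ = ∫⁻ t in Ioi 0, ∫⁻ x, ENNReal.ofReal (t ^ (s - 1) * exp (-t)) *
            ENNReal.ofReal (exp (-(t / ν) * x ^ 2)) := by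
          rw [lintegral_lintegral_swap (by fun_prop)]
          refine setLIntegral_congr_fun measurableSet_Ioi fun t (ht : 0 < t) => ?_
          congr with x
          rw [← ENNReal.ofReal_mul (by positivity), mul_assoc, ← exp_add]
          congr 3
          field_simp
          ring
      _ = ∫⁻ t in Ioi 0, ENNReal.ofReal (√(ν * π) * (t ^ (s - 1 / 2 - 1) * exp (-(1 * t)))) := by
          refine setLIntegral_congr_fun measurableSet_Ioi fun t (ht : 0 < t) => ?_
          rw [lintegral_const_mul' _ _ ofReal_ne_top, lintegral_exp_neg_mul_sq (by positivity),
            ← ENNReal.ofReal_mul (by positivity)]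
          congr 1
          rw [show π / (t / ν) = ν * π / t by field_simp, sqrt_div' _ ht.le, sqrt_eq_rpow t,
            one_mul, show s - 1 = s - 1 / 2 - 1 + 1 / 2 by ring, rpow_add ht]
          field_simp
      _ = ENNReal.ofReal (√(ν * π) * Gamma (s - 1 / 2)) := by
          simp_rw [ENNReal.ofReal_mul (sqrt_nonneg _)]
          rw [lintegral_const_mul' _ _ ofReal_ne_top,
            lintegral_Ioi_rpow_mul_exp_neg_mul (by linarith) one_pos, div_one, Real.one_rpow, one_mul]
  refine (ENNReal.mul_right_inj (by simpa using hΓ) ofReal_ne_top).1 (key.trans ?_)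
  rw [← ENNReal.ofReal_mul hΓ.le, mul_div_cancel₀ _ hΓ.ne']

lemma isProbabilityMeasure_studentTMeasure {ν : ℝ} (hν : 0 < ν) :
    IsProbabilityMeasure (studentTMeasure ν) := by
  have := Gamma_pos_of_pos (by linarith : 0 < (ν + 1) / 2)
  have := Gamma_pos_of_pos (by linarith : 0 < ν / 2)
  constructor
  rw [studentTMeasure, withDensity_apply _ MeasurableSet.univ, Measure.restrict_univ]
  simp_rw [ENNReal.ofReal_mul (by positivity :
    0 ≤ Gamma ((ν + 1) / 2) / (√(ν * π) * Gamma (ν / 2)))]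
  rw [lintegral_const_mul' _ _ ofReal_ne_top, neg_div,
    lintegral_one_add_sq_div_rpow_neg hν (by linarith), ← ENNReal.ofReal_mul (by positivity),
    show (ν + 1) / 2 - 1 / 2 = ν / 2 by ring, ENNReal.ofReal_eq_one]
  field_simp

lemma eventually_studentTMeasure_Ioi_lt {νh νl : ℝ} (hh : 0 < νh) (hlt : νh < νl) (δ : ℝ) :
    ∀ᶠ r in atTop, studentTMeasure νl (Ioi r) < studentTMeasure νh (Ici (r + δ)) := by
  obtain ⟨C, hC⟩ := studentTMeasure_Ioi_le (hh.trans hlt)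
  obtain ⟨c, hc, hc'⟩ := studentTMeasure_Ioi_ge hh
  exact eventually_measure_Ioi_lt_measure_Ici hh.le hlt hc ((eventually_gt_atTop 0).mono hC)
    ((eventually_ge_atTop _).mono hc') δ

/-- Student's t-distributions with different degrees of freedom are at infinite
`W∞` distance. -/
theorem WInf_studentT_eq_top (ν₁ ν₂ : ℝ) (h₁ : 0 < ν₁) (h₂ : 0 < ν₂)
    (hne : ν₁ ≠ ν₂) :
    WInf (studentTMeasure ν₁) (studentTMeasure ν₂) = ∞ := by
  refine WInf_eq_top_of_forall_exists_lt fun ε _ => ?_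
  rcases hne.lt_or_gt with h | h
  · obtain ⟨r, hr⟩ := (eventually_studentTMeasure_Ioi_lt h₁ h ε).exists
    exact ⟨_, measurableSet_Ici, measure_thickening_Ici_lt hr⟩
  · have := isProbabilityMeasure_studentTMeasure h₁
    have := isProbabilityMeasure_studentTMeasure h₂
    obtain ⟨r, hr⟩ := (eventually_studentTMeasure_Ioi_lt h₂ h ε).exists
    exact ⟨_, measurableSet_Iic, measure_thickening_Iic_lt hr⟩
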